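/- Let n ≥ 1, s ∈ 𝔽₂ⁿ, and O : 𝔽₂ⁿ → {−1,1}, and let ρ = |{x ∈ 𝔽₂ⁿ : O(x) ≠ (−1)^{⟨s,x⟩}}| / 2ⁿ. If ρ < 1/4, then Ô(s) = 1 − 2ρ > 1/2, and for every v ∈ 𝔽₂ⁿ with v ≠ s one has |Ô(v)| ≤ 2ρ < 1/2; in particular, s is the unique element v of 𝔽₂ⁿ with |Ô(v)| > 1/2. -/

import Mathlib

open scoped Classical

/-- Inner product `⟨v,x⟩ = Σ_j v_j·x_j` in `𝔽₂ⁿ`. -/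
def ip {n : ℕ} (v x : Fin n → ZMod 2) : ZMod 2 := ∑ j, v j * x j

/-- The Fourier (Walsh–Hadamard) transform on `𝔽₂ⁿ`:
`f̂(v) = 2^{−n} Σ_x f(x)·(−1)^{⟨v,x⟩}`. -/
noncomputable def wht {n : ℕ} (f : (Fin n → ZMod 2) → ℂ) (v : Fin n → ZMod 2) : ℂ :=
  ((2 : ℂ) ^ n)⁻¹ * ∑ x : Fin n → ZMod 2, f x * (-1 : ℂ) ^ (ip v x).val

/-! Write `O = χ_s - e`, where `e = 2·χ_s` on the set `D` where `O` and `χ_s` disagree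
and `e = 0` elsewhere. By orthogonality of characters `χ̂_s = δ_s`, so `Ô(v) = δ_s(v) - ê(v)`.
Since `e·χ_s = 2·1_D`, `ê(s) = 2|D|/2ⁿ = 2ρ` exactly, while for every `v` the triangle
inequality gives `‖ê(v)‖ ≤ 2ρ`. -/

lemma neg_one_pow_val_add {R : Type*} [Ring R] (a b : ZMod 2) :
    (-1 : R) ^ (a + b).val = (-1) ^ a.val * (-1) ^ b.val := by
  rw [ZMod.val_add, ← pow_add, neg_one_pow_eq_pow_mod_two (a.val + b.val)]

lemma eq_sub_ite_of_eq_one_or_eq_neg_one {R : Type*} [CommRing R] {a b : R}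
    (ha : a = 1 ∨ a = -1) (hb : b = 1 ∨ b = -1) :
    a = b - if a ≠ b then 2 * b else 0 := by
  split_ifs with h
  · rcases ha with rfl | rfl <;> rcases hb with rfl | rfl <;> first | exact absurd rfl h | ring
  · rw [not_not.mp h, sub_zero]

section Walsh

variable {n : ℕ}

lemma ip_eq_dotProduct (v x : Fin n → ZMod 2) : ip v x = v ⬝ᵥ x := rfl

lemma add_eq_zero_iff_eq_of_zmod_two {a b : Fin n → ZMod 2} : a + b = 0 ↔ a = b := by
  simp only [funext_iff, Pi.add_apply, Pi.zero_apply, CharTwo.add_eq_zero]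

noncomputable def walshChar (v : Fin n → ZMod 2) : AddChar (Fin n → ZMod 2) ℂ where
  toFun x := (-1) ^ (ip v x).val
  map_zero_eq_one' := by simp [ip_eq_dotProduct]
  map_add_eq_mul' x y := by rw [ip_eq_dotProduct, dotProduct_add, neg_one_pow_val_add]; rfl

lemma walshChar_apply (v x : Fin n → ZMod 2) : walshChar v x = (-1) ^ (ip v x).val := rfl

lemma walshChar_add (v w : Fin n → ZMod 2) :
    walshChar (v + w) = walshChar v * walshChar w := by
  ext x
  rw [AddChar.mul_apply, walshChar_apply, ip_eq_dotProduct, add_dotProduct, neg_one_pow_val_add]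
  rfl

lemma walshChar_eq_zero_iff {v : Fin n → ZMod 2} : walshChar v = 0 ↔ v = 0 := by
  refine ⟨fun h => ?_, fun h => ?_⟩
  · by_contra hv
    obtain ⟨j, hj⟩ := Function.ne_iff.mp hv
    have hvj : v j = 1 := (by decide : ∀ a : ZMod 2, a ≠ 0 → a = 1) _ hj
    have := AddChar.eq_zero_iff.mp h (Pi.single j 1)
    rw [walshChar_apply, ip_eq_dotProduct, dotProduct_single, hvj, mul_one, ZMod.val_one] at this
    norm_num at this
  · subst h
    ext x
    simp [walshChar_apply, ip_eq_dotProduct]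

lemma norm_walshChar (v x : Fin n → ZMod 2) : ‖walshChar v x‖ = 1 := by
  simp [walshChar_apply]

lemma walshChar_eq_one_or_eq_neg_one (v x : Fin n → ZMod 2) :
    walshChar v x = 1 ∨ walshChar v x = -1 :=
  neg_one_pow_eq_or ℂ _

lemma walshChar_mul_self (v x : Fin n → ZMod 2) : walshChar v x * walshChar v x = 1 := by
  rw [← AddChar.mul_apply, ← walshChar_add,
    walshChar_eq_zero_iff.mpr (add_eq_zero_iff_eq_of_zmod_two.mpr rfl), AddChar.zero_apply]

lemma sum_walshChar_mul_walshChar (v w : Fin n → ZMod 2) :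
    ∑ x, walshChar v x * walshChar w x = if v = w then 2 ^ n else 0 := by
  simp only [← AddChar.mul_apply, ← walshChar_add, AddChar.sum_eq_ite, walshChar_eq_zero_iff,
    add_eq_zero_iff_eq_of_zmod_two]
  simp [ZMod.card]

lemma wht_eq_sum_walshChar (f : (Fin n → ZMod 2) → ℂ) (v : Fin n → ZMod 2) :
    wht f v = ((2 : ℂ) ^ n)⁻¹ * ∑ x, f x * walshChar v x := rfl

lemma wht_walshChar (s v : Fin n → ZMod 2) : wht (walshChar s) v = if v = s then 1 else 0 := by
  rcases eq_or_ne v s with rfl | h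
  · simp [wht_eq_sum_walshChar, sum_walshChar_mul_walshChar]
  · simp [wht_eq_sum_walshChar, sum_walshChar_mul_walshChar, h, h.symm]

lemma wht_sub (f g : (Fin n → ZMod 2) → ℂ) (v : Fin n → ZMod 2) :
    wht (f - g) v = wht f v - wht g v := by
  simp only [wht_eq_sum_walshChar, Pi.sub_apply, sub_mul, Finset.sum_sub_distrib, mul_sub]

lemma norm_wht_le (f : (Fin n → ZMod 2) → ℂ) (v : Fin n → ZMod 2) :
    ‖wht f v‖ ≤ ((2 : ℝ) ^ n)⁻¹ * ∑ x, ‖f x‖ := by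
  rw [wht_eq_sum_walshChar, norm_mul, norm_inv, norm_pow, RCLike.norm_ofNat]
  gcongr
  refine (norm_sum_le _ _).trans_eq ?_
  simp

end Walsh

theorem stmt8_general (n : ℕ) (s : Fin n → ZMod 2)
    (O : (Fin n → ZMod 2) → ℂ) (hO : ∀ x, O x = 1 ∨ O x = -1)
    (ρ : ℝ)
    (hρdef : ρ = ((Finset.univ.filter fun x : Fin n → ZMod 2 =>
        O x ≠ (-1 : ℂ) ^ (ip s x).val).card : ℝ) / (2 : ℝ) ^ n)
    (hρ : ρ < 1 / 4) :
    wht O s = ((1 - 2 * ρ : ℝ) : ℂ)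
    ∧ 1 / 2 < 1 - 2 * ρ
    ∧ (∀ v : Fin n → ZMod 2, v ≠ s → ‖wht O v‖ ≤ 2 * ρ)
    ∧ 2 * ρ < 1 / 2
    ∧ ∀ v : Fin n → ZMod 2, 1 / 2 < ‖wht O v‖ → v = s := by
  set D := Finset.univ.filter fun x => O x ≠ walshChar s x
  replace hρdef : ρ = D.card / 2 ^ n := hρdef
  set e : (Fin n → ZMod 2) → ℂ := fun x => if x ∈ D then 2 * walshChar s x else 0
  have hOe : O = walshChar s - e := funext fun x => by
    simp only [e, D, Finset.mem_filter, Finset.mem_univ, true_and, Pi.sub_apply]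
    exact eq_sub_ite_of_eq_one_or_eq_neg_one (hO x) (walshChar_eq_one_or_eq_neg_one s x)
  have he_s : wht e s = 2 * ρ := by
    simp only [wht_eq_sum_walshChar, e, ite_mul, zero_mul, mul_assoc, walshChar_mul_self, mul_one,
      Finset.sum_ite_mem, Finset.univ_inter, Finset.sum_const, nsmul_eq_mul, hρdef]
    push_cast
    ring
  have he_norm : ∑ x, ‖e x‖ = 2 * D.card := by
    simp only [e, apply_ite, norm_mul, norm_walshChar, norm_zero, Complex.norm_ofNat, mul_one,
      Finset.sum_ite_mem, Finset.univ_inter, Finset.sum_const, nsmul_eq_mul]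
    ring
  have hfar : ∀ v, v ≠ s → ‖wht O v‖ ≤ 2 * ρ := fun v hv => by
    rw [hOe, wht_sub, wht_walshChar, if_neg hv, zero_sub, norm_neg]
    refine (norm_wht_le e v).trans_eq ?_
    rw [he_norm, hρdef]
    ring
  refine ⟨?_, by linarith, hfar, by linarith, fun v hv => ?_⟩
  · rw [hOe, wht_sub, wht_walshChar, if_pos rfl, he_s]
    push_cast
    ring
  · by_contra hne
    linarith [hfar v hne]

/-- Goldreich–Levin uniqueness: if `O : 𝔽₂ⁿ → {−1,1}` disagrees with the character
`x ↦ (−1)^{⟨s,x⟩}` on a fraction `ρ < 1/4` of inputs, then `Ô(s) = 1 − 2ρ > 1/2`,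
`|Ô(v)| ≤ 2ρ < 1/2` for every `v ≠ s`, and `s` is the unique `v` with `|Ô(v)| > 1/2`. -/
theorem stmt8 (n : ℕ) (hn : 1 ≤ n) (s : Fin n → ZMod 2)
    (O : (Fin n → ZMod 2) → ℂ) (hO : ∀ x, O x = 1 ∨ O x = -1)
    (ρ : ℝ)
    (hρdef : ρ = ((Finset.univ.filter fun x : Fin n → ZMod 2 =>
        O x ≠ (-1 : ℂ) ^ (ip s x).val).card : ℝ) / (2 : ℝ) ^ n)
    (hρ : ρ < 1 / 4) :
    wht O s = ((1 - 2 * ρ : ℝ) : ℂ)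
    ∧ 1 / 2 < 1 - 2 * ρ
    ∧ (∀ v : Fin n → ZMod 2, v ≠ s → ‖wht O v‖ ≤ 2 * ρ)
    ∧ 2 * ρ < 1 / 2
    ∧ ∀ v : Fin n → ZMod 2, 1 / 2 < ‖wht O v‖ → v = s :=
  stmt8_general n s O hO ρ hρdef hρ
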